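/- Let (D,g) be a metrised ℝ-divisor on a regular projective curve X over a trivially valued field k. Then (D,g) is ℝ-linearly equivalent to an effective metrised ℝ-divisor if and only if μ_{inf,x}(g) = 0 for all but finitely many closed points x and one of the following holds: (a) μ_inf(g) > 0, or (b) the ℝ-divisor Σ_x μ_{inf,x}(g)·x is principal. -/

import Mathlib

open scoped BigOperators Classical

/-- An abstract package of the data attached to a regular projective curve `X` over a field
`k`: `F = Rat(X)` is the function field, `P = X^{(1)}` is the set of closed points,
`degp x = [k(x):k]`, `ord x f` is the order of vanishing of a nonzero rational function `f`
at `x`, `H0 D` is the Riemann–Roch space of an ℝ-divisor `D : P → ℝ` (a `k`-subspace of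
`F`), and `riemannRoch` is the Riemann–Roch estimate for integral divisors of large
degree. -/
structure CurveData (k F P : Type*) [Field k] [Field F] [Algebra k F] : Type _ where
  genus : ℕ
  degp : P → ℕ
  degp_pos : ∀ x, 0 < degp x
  ord : P → F → ℤ
  ord_mul : ∀ (x : P) {f g : F}, f ≠ 0 → g ≠ 0 → ord x (f * g) = ord x f + ord x g
  ord_support_finite : ∀ {f : F}, f ≠ 0 → (Function.support fun x => ord x f).Finite
  ord_deg_zero : ∀ {f : F}, f ≠ 0 → (∑ᶠ x, (ord x f : ℝ) * (degp x : ℝ)) = 0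
  finitely_generated : ∃ S : Finset F, IntermediateField.adjoin k (S : Set F) = ⊤
  H0 : (P → ℝ) → Submodule k F
  mem_H0 : ∀ (D : P → ℝ) (f : F), f ∈ H0 D ↔ (f ≠ 0 → ∀ x, 0 ≤ (ord x f : ℝ) + D x)
  H0_finite : ∀ D, Module.Finite k (H0 D)
  riemannRoch : ∀ D : P → ℝ, (Function.support D).Finite →
    (∀ x, ∃ n : ℤ, (n : ℝ) = D x) →
    2 * (genus : ℝ) - 2 < ∑ᶠ x, D x * (degp x : ℝ) →
    (Module.finrank k ↥(H0 D) : ℝ) = (∑ᶠ x, D x * (degp x : ℝ)) + 1 - genus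

variable {k F P : Type*} [Field k] [Field F] [Algebra k F]

/-- The degree of an ℝ-divisor `D`: `deg D = Σ_x D(x)·[k(x):k]`. -/
noncomputable def CurveData.degD (C : CurveData k F P) (D : P → ℝ) : ℝ :=
  ∑ᶠ x, D x * (C.degp x : ℝ)

/-- `E` is a principal ℝ-divisor, i.e. lies in the ℝ-linear span of the divisors of nonzero
rational functions (the image of `Rat(X)^×_ℝ → nDiv_ℝ(X)`). -/
def CurveData.IsPrincipalR (C : CurveData k F P) (E : P → ℝ) : Prop :=
  E ∈ Submodule.span ℝ {E' : P → ℝ | ∃ f : F, f ≠ 0 ∧ E' = fun x => (C.ord x f : ℝ)}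

open scoped BigOperators Classical

/-- A Green function on the tree `𝒯(X^{(1)})` of length 1 (the Berkovich analytification
of a curve over a trivially valued field), described through its restrictions to the
branches: `val x t` is the value at the point of `[η₀, x₀]` with parameter `t ∈ [0,∞)`,
`slope x = μ_x(g)` is the asymptotic slope along the branch of `x` (so the value at the
leaf `x₀` is `±∞` when `slope x ≠ 0`), and `root = g(η₀)`. Continuity on the tree amounts
to continuity along each branch, existence of the limit of `φ_g = g − slope·t` at each
leaf, finiteness of the support of the slopes, and the condition that for every `ε > 0`
the bounded part `φ_g` stays `ε`-close to `g(η₀)` on all but finitely many branches. -/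
structure GreenFunction (P : Type*) : Type _ where
  val : P → ℝ → ℝ
  slope : P → ℝ
  root : ℝ
  val_zero : ∀ x, val x 0 = root
  contOn : ∀ x, ContinuousOn (val x) (Set.Ici 0)
  slope_support_finite : (Function.support slope).Finite
  phi_tendsto : ∀ x, ∃ L : ℝ,
    Filter.Tendsto (fun t => val x t - slope x * t) Filter.atTop (nhds L)
  rootCont : ∀ ε > (0:ℝ), {x : P | ∃ t ≥ (0:ℝ), ε ≤ |val x t - slope x * t - root|}.Finite

namespace GreenFunction

variable {P : Type*}

/-- Sum of two Green functions (corresponding to the sum of metrised ℝ-divisors). -/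
noncomputable def add (g h : GreenFunction P) : GreenFunction P where
  val x t := g.val x t + h.val x t
  slope x := g.slope x + h.slope x
  root := g.root + h.root
  val_zero x := by simp [g.val_zero, h.val_zero]
  contOn x := (g.contOn x).add (h.contOn x)
  slope_support_finite :=
    (g.slope_support_finite.union h.slope_support_finite).subset
      (Function.support_add _ _)
  phi_tendsto x := by
    obtain ⟨L1, h1⟩ := g.phi_tendsto x
    obtain ⟨L2, h2⟩ := h.phi_tendsto x
    refine ⟨L1 + L2, ?_⟩
    have h3 := h1.add h2
    convert h3 using 2 with t
    ring
  rootCont := by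
    intro ε hε
    have h1 := g.rootCont (ε / 2) (by linarith)
    have h2 := h.rootCont (ε / 2) (by linarith)
    refine (h1.union h2).subset ?_
    intro x hx
    obtain ⟨t, ht, habs⟩ := hx
    by_contra hc
    simp only [Set.mem_union, Set.mem_setOf_eq, not_or, not_exists] at hc
    push_neg at hc
    obtain ⟨hc1, hc2⟩ := hc
    have e1 := hc1 t ht
    have e2 := hc2 t ht
    have tri : |(g.val x t + h.val x t) - (g.slope x + h.slope x) * t - (g.root + h.root)|
        ≤ |g.val x t - g.slope x * t - g.root| + |h.val x t - h.slope x * t - h.root| := by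
      have h4 := abs_add_le (g.val x t - g.slope x * t - g.root)
        (h.val x t - h.slope x * t - h.root)
      have h5 : (g.val x t + h.val x t) - (g.slope x + h.slope x) * t - (g.root + h.root)
          = (g.val x t - g.slope x * t - g.root) + (h.val x t - h.slope x * t - h.root) := by
        ring
      rw [h5]
      exact h4
    linarith

/-- Adding a real constant `c` to a Green function (i.e. `g + c`). -/
noncomputable def addConst (g : GreenFunction P) (c : ℝ) : GreenFunction P where
  val x t := g.val x t + c
  slope := g.slope
  root := g.root + c
  val_zero x := by simp [g.val_zero]
  contOn x := (g.contOn x).add continuousOn_const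
  slope_support_finite := g.slope_support_finite
  phi_tendsto x := by
    obtain ⟨L, hL⟩ := g.phi_tendsto x
    refine ⟨L + c, ?_⟩
    have h3 := hL.add (tendsto_const_nhds (x := c))
    convert h3 using 2 with t
    ring
  rootCont := by
    intro ε hε
    refine (g.rootCont ε hε).subset ?_
    rintro x ⟨t, ht, habs⟩
    refine ⟨t, ht, ?_⟩
    have : (fun (x : P) (t : ℝ) => g.val x t + c) x t - g.slope x * t - (g.root + c)
        = g.val x t - g.slope x * t - g.root := by ring
    rwa [this] at habs

end GreenFunction

variable {k F P : Type*} [Field k] [Field F] [Algebra k F]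

/-- The essential infimum `λ_ess(D,g)`: the supremum over `φ ∈ Γ(D)_ℝ^×` (represented by
the corresponding principal ℝ-divisors `E = (φ)` with `E + D ≥ 0`) of the infimum over the
Berkovich tree `X^an` of `g_{(φ)} + g` (on the branch of `x` at parameter `t`, this
function has value `E x · t + g(ξ_x(t))`). Here `D = g.slope`. -/
noncomputable def CurveData.lambdaEss (C : CurveData k F P) (g : GreenFunction P) : EReal :=
  ⨆ E ∈ {E : P → ℝ | C.IsPrincipalR E ∧ ∀ x, 0 ≤ E x + g.slope x},
    ⨅ (x : P) (t : ℝ) (_ : 0 ≤ t), ((E x * t + g.val x t : ℝ) : EReal)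

/-- `μ_{inf,x}(g) = inf_{ξ ∈ (η₀,x₀)} g(ξ)/t(ξ) ∈ ℝ ∪ {−∞}`, as an extended real. -/
noncomputable def GreenFunction.muInfX (g : GreenFunction P) (x : P) : EReal :=
  ⨅ (t : ℝ) (_ : 0 < t), ((g.val x t / t : ℝ) : EReal)

/-- Conversion `EReal → ℝ≥0∞` (positive part, sending `⊤` to `⊤`). -/
noncomputable def erealToENNReal (e : EReal) : ENNReal :=
  if e = ⊤ then ⊤ else ENNReal.ofReal e.toReal

/-- The Arakelov degree of an ultrametrically normed finite-dimensional vector space over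
a trivially valued field: minus the logarithm of the determinant norm of a basis wedge.
(Over a trivially valued field, for an ultrametric norm `N`, the determinant norm of a
generator of the determinant line is the infimum over bases of the product of the norms,
so `deghat = sup over bases of −Σ_i log N(bᵢ)`.) -/
noncomputable def deghat (k V : Type*) [Field k] [AddCommGroup V] [Module k V]
    (N : V → ℝ) : ℝ :=
  ⨆ b : Module.Basis (Fin (Module.finrank k V)) k V, -∑ i, Real.log (N (b i))

/-- The positive Arakelov degree: the supremum of the Arakelov degrees of all subspaces. -/
noncomputable def deghatPlus (k V : Type*) [Field k] [AddCommGroup V] [Module k V]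
    (N : V → ℝ) : ℝ :=
  ⨆ W : Submodule k V, deghat k W (fun w => N (w : V))

/-- The norm `‖f‖_{ng} = exp(−inf_{ξ∈X^an}(g_{(f)} + ng)(ξ))` on `H⁰(nD)`, for `f ≠ 0`. -/
noncomputable def CurveData.gnorm (C : CurveData k F P) (g : GreenFunction P) (n : ℕ)
    (f : F) : ℝ :=
  if f = 0 then 0
  else Real.exp (-sInf {r : ℝ | ∃ (x : P) (t : ℝ), 0 ≤ t ∧
    r = (C.ord x f : ℝ) * t + (n : ℝ) * g.val x t})

/-- The `χ`-volume of a metrised ℝ-divisor `(D, g)` with `D = g.slope`: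
`limsup_n 2·deghat(H⁰(nD), ‖·‖_{ng})/n²`. -/
noncomputable def CurveData.volChi (C : CurveData k F P) (g : GreenFunction P) : ℝ :=
  Filter.limsup (fun n : ℕ =>
    deghat k ↥(C.H0 fun x => (n : ℝ) * g.slope x) (fun f => C.gnorm g n (f : F))
      / ((n : ℝ) ^ 2 / 2)) Filter.atTop

/-- The arithmetic volume of a metrised ℝ-divisor `(D, g)` with `D = g.slope`:
`limsup_n 2·deghat₊(H⁰(nD), ‖·‖_{ng})/n²`. -/
noncomputable def CurveData.volHat (C : CurveData k F P) (g : GreenFunction P) : ℝ :=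
  Filter.limsup (fun n : ℕ =>
    deghatPlus k ↥(C.H0 fun x => (n : ℝ) * g.slope x) (fun f => C.gnorm g n (f : F))
      / ((n : ℝ) ^ 2 / 2)) Filter.atTop

/-- A metrised ℝ-divisor `(D,g)` (with `D = g.slope`) is big if `vol-hat(D,g) > 0`. -/
def CurveData.Big (C : CurveData k F P) (g : GreenFunction P) : Prop :=
  0 < C.volHat g

/-- A metrised ℝ-divisor is pseudo-effective if its sum with every big metrised ℝ-divisor
is big. -/
def CurveData.PseudoEffective (C : CurveData k F P) (g : GreenFunction P) : Prop :=
  ∀ g₀ : GreenFunction P, C.Big g₀ → C.Big (g.add g₀)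

/-!
A principal `E = (φ)` makes `(D, g)` effective exactly when `-E(x) ≤ μ_{inf,x}(g)` at every
closed point: on the branch of `x` the condition `g + E(x)·t ≥ 0` says `g/t ≥ -E(x)`, and the
slope `D(x)`, being the limit of `g/t`, then also dominates `-E(x)`. So the theorem asks when
the ℝ-divisor `μ = Σ_x μ_{inf,x}(g)·x` can be made effective by adding a principal divisor.
Principal divisors have degree zero, hence this forces `deg μ ≥ 0`, and `deg μ = 0` forces
`μ + E = 0`, i.e. `μ` principal. Conversely, if `deg μ > 0` then Riemann–Roch gives a rational
function `f ≠ 0` with `(f) + ⌊nμ⌋ ≥ 0` for `n` large, and `E = (f)/n` works.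
-/

theorem EReal.coe_finset_sum {ι : Type*} (s : Finset ι) (f : ι → ℝ) :
    ((∑ i ∈ s, f i : ℝ) : EReal) = ∑ i ∈ s, (f i : EReal) :=
  map_sum (⟨⟨(↑), EReal.coe_zero⟩, EReal.coe_add⟩ : ℝ →+ EReal) f s

theorem EReal.coe_le_iff_le_toReal {x : EReal} (hx : x ≠ ⊤) (m : ℝ) :
    (m : EReal) ≤ x ↔ x ≠ ⊥ ∧ m ≤ x.toReal := by
  refine ⟨fun h => ⟨ne_bot_of_le_ne_bot (EReal.coe_ne_bot m) h, ?_⟩, fun ⟨hb, h⟩ => ?_⟩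
  · simpa using EReal.toReal_le_toReal h (EReal.coe_ne_bot m) hx
  · exact (EReal.coe_le_coe_iff.2 h).trans (EReal.coe_toReal_le hb)

namespace GreenFunction

variable {P : Type*} (g : GreenFunction P) (x : P)

theorem muInfX_ne_top : g.muInfX x ≠ ⊤ :=
  ((iInf₂_le 1 one_pos : g.muInfX x ≤ ((g.val x 1 / 1 : ℝ) : EReal)).trans_lt
    (EReal.coe_lt_top _)).ne

theorem coe_le_muInfX_iff (m : ℝ) :
    (m : EReal) ≤ g.muInfX x ↔ ∀ t : ℝ, 0 < t → m * t ≤ g.val x t := by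
  simp only [muInfX, le_iInf_iff, EReal.coe_le_coe_iff]
  exact forall₂_congr fun t ht => le_div_iff₀ ht

theorem mul_le_val_of_coe_le_muInfX {m : ℝ} (h : (m : EReal) ≤ g.muInfX x) {t : ℝ}
    (ht : 0 ≤ t) : m * t ≤ g.val x t := by
  have ht' : t ∈ closure (Set.Ioi 0) := by rwa [closure_Ioi]
  exact ContinuousWithinAt.closure_le ht' (continuous_const_mul m).continuousWithinAt
    ((g.contOn x t ht).mono Set.Ioi_subset_Ici_self) ((g.coe_le_muInfX_iff x m).1 h)

theorem tendsto_val_div_atTop :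
    Filter.Tendsto (fun t => g.val x t / t) Filter.atTop (nhds (g.slope x)) := by
  obtain ⟨L, hL⟩ := g.phi_tendsto x
  have hdiv := hL.div_atTop Filter.tendsto_id
  rw [← add_zero (g.slope x)]
  refine (tendsto_const_nhds.add hdiv).congr' ?_
  filter_upwards [Filter.eventually_gt_atTop 0] with t ht
  simp only [id]
  field_simp
  ring

theorem muInfX_le_slope : g.muInfX x ≤ g.slope x :=
  ge_of_tendsto ((continuous_coe_real_ereal.tendsto _).comp (g.tendsto_val_div_atTop x))
    (Filter.eventually_gt_atTop 0 |>.mono fun _ ht => iInf₂_le _ ht)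

theorem nonneg_add_iff_neg_le_muInfX (e : ℝ) :
    (0 ≤ g.slope x + e ∧ ∀ t ≥ (0:ℝ), 0 ≤ g.val x t + e * t) ↔
      ((-e : ℝ) : EReal) ≤ g.muInfX x := by
  refine ⟨fun ⟨_, hval⟩ => (g.coe_le_muInfX_iff x _).2 fun t ht => ?_,
    fun h => ⟨?_, fun t ht => ?_⟩⟩
  · linarith [hval t ht.le]
  · linarith [EReal.coe_le_coe_iff.1 (h.trans (g.muInfX_le_slope x))]
  · linarith [g.mul_le_val_of_coe_le_muInfX x h ht]

theorem finite_muInfX_ne_zero {E : P → ℝ} (hE : (Function.support E).Finite)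
    (hle : ∀ x, ((-E x : ℝ) : EReal) ≤ g.muInfX x) : {x | g.muInfX x ≠ 0}.Finite := by
  refine (hE.union g.slope_support_finite).subset fun x hx => ?_
  by_contra hout
  simp only [Set.mem_union, Function.mem_support, not_or, not_not] at hout
  have hupper := g.muInfX_le_slope x
  have hlower := hle x
  rw [hout.1, neg_zero] at hlower
  rw [hout.2] at hupper
  exact hx (le_antisymm (by exact_mod_cast hupper) (by exact_mod_cast hlower))

end GreenFunction

theorem support_floor_mul_subset {α : Type*} (μ : α → ℝ) (c : ℝ) :
    (Function.support fun x => (⌊c * μ x⌋ : ℝ)) ⊆ Function.support μ := fun x hx h0 => by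
  simp [h0] at hx

namespace CurveData

variable (C : CurveData k F P)

theorem degD_add {D E : P → ℝ} (hD : (Function.support D).Finite)
    (hE : (Function.support E).Finite) : C.degD (D + E) = C.degD D + C.degD E := by
  simp only [degD, Pi.add_apply, add_mul]
  exact finsum_add_distrib (hD.subset (Function.support_mul_subset_left _ _))
    (hE.subset (Function.support_mul_subset_left _ _))

theorem degD_smul (c : ℝ) (D : P → ℝ) : C.degD (c • D) = c * C.degD D := by
  simp only [degD, Pi.smul_apply, smul_eq_mul, mul_finsum, mul_assoc]

theorem degD_eq_sum {D : P → ℝ} {s : Finset P} (h : Function.support D ⊆ s) :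
    C.degD D = ∑ x ∈ s, D x * C.degp x :=
  finsum_eq_sum_of_support_subset _ ((Function.support_mul_subset_left _ _).trans h)

theorem degD_nonneg {D : P → ℝ} (hD : 0 ≤ D) : 0 ≤ C.degD D :=
  finsum_nonneg fun x => mul_nonneg (hD x) (Nat.cast_nonneg _)

theorem eq_zero_of_nonneg_of_degD_eq_zero {D : P → ℝ} (hfin : (Function.support D).Finite)
    (hD : 0 ≤ D) (h0 : C.degD D = 0) : D = 0 := by
  rw [C.degD_eq_sum hfin.coe_toFinset.symm.subset, Finset.sum_eq_zero_iff_of_nonneg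
    fun x _ => mul_nonneg (hD x) (Nat.cast_nonneg _)] at h0
  funext x
  by_cases hx : x ∈ hfin.toFinset
  · exact (mul_eq_zero.1 (h0 x hx)).resolve_right (Nat.cast_ne_zero.2 (C.degp_pos x).ne')
  · simpa using hx

variable {C}

theorem IsPrincipalR.support_finite {E : P → ℝ} (hE : C.IsPrincipalR E) :
    (Function.support E).Finite := by
  induction hE using Submodule.span_induction with
  | mem _ h =>
    obtain ⟨f, hf, rfl⟩ := h
    exact (C.ord_support_finite hf).subset fun x hx => by simpa using hx
  | zero => simp
  | add _ _ _ _ hD hE => exact (hD.union hE).subset (Function.support_add _ _)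
  | smul c _ _ hD => exact hD.subset (Function.support_const_smul_subset c _)

theorem IsPrincipalR.degD_eq_zero {E : P → ℝ} (hE : C.IsPrincipalR E) : C.degD E = 0 := by
  induction hE using Submodule.span_induction with
  | mem _ h =>
    obtain ⟨f, hf, rfl⟩ := h
    exact C.ord_deg_zero hf
  | zero => simp [degD]
  | add _ _ hD hE hD0 hE0 =>
    rw [C.degD_add (IsPrincipalR.support_finite hD) (IsPrincipalR.support_finite hE), hD0, hE0,
      add_zero]
  | smul c _ _ hD0 => rw [C.degD_smul, hD0, mul_zero]

variable (C)

theorem degD_pos_or_isPrincipalR_of_nonneg_add {μ E : P → ℝ}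
    (hμ : (Function.support μ).Finite) (hE : C.IsPrincipalR E) (h : 0 ≤ μ + E) :
    0 < C.degD μ ∨ C.IsPrincipalR μ := by
  have hdeg : C.degD (μ + E) = C.degD μ := by
    rw [C.degD_add hμ hE.support_finite, hE.degD_eq_zero, add_zero]
  rcases (C.degD_nonneg h).lt_or_eq with hpos | hzero
  · exact Or.inl (hdeg ▸ hpos)
  · have hsum := C.eq_zero_of_nonneg_of_degD_eq_zero
      ((hμ.union hE.support_finite).subset (Function.support_add _ _)) h hzero.symm
    rw [eq_neg_of_add_eq_zero_left hsum]
    exact Or.inr (Submodule.neg_mem _ hE)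

theorem exists_ne_zero_mem_H0 {D : P → ℝ} (hfin : (Function.support D).Finite)
    (hint : ∀ x, ∃ n : ℤ, (n : ℝ) = D x) (hdeg : 2 * (C.genus : ℝ) ≤ C.degD D) :
    ∃ f ≠ 0, f ∈ C.H0 D := by
  have := C.H0_finite D
  have hrank : 0 < Module.finrank k (C.H0 D) := by
    have := C.riemannRoch D hfin hint (by rw [← degD]; linarith)
    rw [← degD] at this
    exact_mod_cast (show (0 : ℝ) < Module.finrank k (C.H0 D) by linarith)
  have := Module.finrank_pos_iff.1 hrank
  obtain ⟨v, hv⟩ := exists_ne (0 : C.H0 D)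
  exact ⟨v, by simpa using hv, v.2⟩

theorem degD_floor_mul_ge {μ : P → ℝ} (hμ : (Function.support μ).Finite) (n : ℕ) :
    n * C.degD μ - ∑ x ∈ hμ.toFinset, (C.degp x : ℝ) ≤ C.degD fun x => ⌊n * μ x⌋ := by
  rw [C.degD_eq_sum ((support_floor_mul_subset μ n).trans hμ.coe_toFinset.symm.subset), C.degD_eq_sum hμ.coe_toFinset.symm.subset, Finset.mul_sum,
    ← Finset.sum_sub_distrib]
  refine Finset.sum_le_sum fun x _ => ?_
  nlinarith [Int.sub_one_lt_floor (n * μ x), (Nat.cast_nonneg (C.degp x) : (0 : ℝ) ≤ _)]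

theorem exists_isPrincipalR_nonneg_add_of_degD_pos {μ : P → ℝ}
    (hμ : (Function.support μ).Finite) (hdeg : 0 < C.degD μ) :
    ∃ E, C.IsPrincipalR E ∧ 0 ≤ μ + E := by
  set B := ∑ x ∈ hμ.toFinset, (C.degp x : ℝ)
  -- `n` is chosen so that `deg ⌊nμ⌋ ≥ n · deg μ - B > 2g`, where Riemann–Roch gives a section
  obtain ⟨n, hn⟩ := exists_nat_gt ((2 * C.genus + B) / C.degD μ)
  rw [div_lt_iff₀ hdeg] at hn
  have hnpos : (0 : ℝ) < n := by
    have : 0 ≤ 2 * (C.genus : ℝ) + B := by positivity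
    nlinarith
  obtain ⟨f, hf, hmem⟩ := C.exists_ne_zero_mem_H0 (D := fun x => (⌊n * μ x⌋ : ℝ))
    (hμ.subset (support_floor_mul_subset μ n)) (fun x => ⟨_, rfl⟩)
    (by linarith [C.degD_floor_mul_ge hμ n])
  refine ⟨(n : ℝ)⁻¹ • fun x => (C.ord x f : ℝ),
    Submodule.smul_mem _ _ (Submodule.subset_span ⟨f, hf, rfl⟩), fun x => ?_⟩
  have hord := (C.mem_H0 _ f).1 hmem hf x
  have hfloor := Int.floor_le (n * μ x)
  have hscaled : 0 ≤ n * (μ x + (n : ℝ)⁻¹ * C.ord x f) := by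
    rw [mul_add, mul_inv_cancel_left₀ hnpos.ne']
    linarith
  exact (mul_nonneg_iff_of_pos_left hnpos).1 hscaled

theorem exists_isPrincipalR_nonneg_add_iff {μ : P → ℝ} (hμ : (Function.support μ).Finite) :
    (∃ E, C.IsPrincipalR E ∧ 0 ≤ μ + E) ↔ 0 < C.degD μ ∨ C.IsPrincipalR μ := by
  refine ⟨fun ⟨E, hE, h⟩ => C.degD_pos_or_isPrincipalR_of_nonneg_add hμ hE h, ?_⟩
  rintro (hdeg | hprin)
  · exact C.exists_isPrincipalR_nonneg_add_of_degD_pos hμ hdeg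
  · exact ⟨-μ, Submodule.neg_mem _ hprin, by simp⟩

theorem sum_mul_degp_pos_iff {m : P → EReal}
    (htop : ∀ x, m x ≠ ⊤) (hfin : {x | m x ≠ 0}.Finite) :
    0 < ∑ x ∈ hfin.toFinset, m x * ((C.degp x : ℝ) : EReal) ↔
      (∀ x, m x ≠ ⊥) ∧ 0 < C.degD fun x => (m x).toReal := by
  by_cases hbot : ∀ x, m x ≠ ⊥
  · have hsupp : (Function.support fun x => (m x).toReal) ⊆ hfin.toFinset := fun x hx => by
      rw [Set.Finite.coe_toFinset]
      rintro (h : m x = 0)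
      simp [h] at hx
    rw [C.degD_eq_sum hsupp, ← EReal.coe_pos, EReal.coe_finset_sum]
    simp only [EReal.coe_mul, EReal.coe_toReal (htop _) (hbot _), hbot, ne_eq, not_false_eq_true,
      implies_true, true_and]
  · obtain ⟨x, hx⟩ := not_forall_not.1 hbot
    have hsum : ∑ x ∈ hfin.toFinset, m x * ((C.degp x : ℝ) : EReal) = ⊥ :=
      WithBot.sum_eq_bot_iff.2 ⟨x, by simp [hx], by
        rw [hx, EReal.bot_mul_of_pos (by exact_mod_cast C.degp_pos x)]; rfl⟩
    rw [hsum]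
    exact iff_of_false (not_lt.2 bot_le) fun h => h.1 x hx

end CurveData

/-- Let `(D,g)` (with `D = g.slope`) be a metrised ℝ-divisor on a
regular projective curve over a trivially valued field `k`. Then `(D,g)` is ℝ-linearly
equivalent to an effective metrised ℝ-divisor (i.e. there exists a principal ℝ-divisor
`E = (φ)` with `D + E ≥ 0` and `g + g_{(φ)} ≥ 0` on the whole tree) if and only if
`μ_{inf,x}(g) = 0` for all but finitely many closed points `x`, and either
(a) `μ_inf(g) = Σ_x μ_{inf,x}(g)[k(x):k] > 0`, or
(b) the ℝ-divisor `Σ_x μ_{inf,x}(g)·x` is principal. -/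
theorem rLinearlyEquivalent_effective_iff
    (C : CurveData k F P) (g : GreenFunction P) :
    (∃ E : P → ℝ, C.IsPrincipalR E ∧ (∀ x, 0 ≤ g.slope x + E x) ∧
        ∀ (x : P), ∀ t ≥ (0:ℝ), 0 ≤ g.val x t + E x * t) ↔
      ∃ hfin : {x : P | g.muInfX x ≠ 0}.Finite,
        (0 < ∑ x ∈ hfin.toFinset, g.muInfX x * ((C.degp x : ℝ) : EReal)) ∨
        ((∀ x, g.muInfX x ≠ ⊥) ∧
          C.IsPrincipalR (fun x => (g.muInfX x).toReal)) := by
  simp_rw [← forall_and, g.nonneg_add_iff_neg_le_muInfX]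
  have hle_iff x (e : ℝ) := EReal.coe_le_iff_le_toReal (g.muInfX_ne_top x) (-e)
  have hsupp (hfin : {x | g.muInfX x ≠ 0}.Finite) :
      (Function.support fun x => (g.muInfX x).toReal).Finite :=
    hfin.subset fun x hx h => hx (by simp [h])
  constructor
  · rintro ⟨E, hE, hle⟩
    have hfin := g.finite_muInfX_ne_zero hE.support_finite hle
    refine ⟨hfin, ?_⟩
    rw [C.sum_mul_degp_pos_iff g.muInfX_ne_top hfin]
    have hnb x : g.muInfX x ≠ ⊥ := ((hle_iff x (E x)).1 (hle x)).1
    have := C.degD_pos_or_isPrincipalR_of_nonneg_add (hsupp hfin) hE fun x =>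
      neg_le_iff_add_nonneg.1 ((hle_iff x (E x)).1 (hle x)).2
    tauto
  · rintro ⟨hfin, h⟩
    rw [C.sum_mul_degp_pos_iff g.muInfX_ne_top hfin] at h
    obtain ⟨hnb, h⟩ : (∀ x, g.muInfX x ≠ ⊥) ∧
        (0 < C.degD _ ∨ C.IsPrincipalR fun x => (g.muInfX x).toReal) := by tauto
    obtain ⟨E, hE, hnn⟩ := (C.exists_isPrincipalR_nonneg_add_iff (hsupp hfin)).2 h
    exact ⟨E, hE, fun x => (hle_iff x (E x)).2 ⟨hnb x, neg_le_iff_add_nonneg.2 (hnn x)⟩⟩
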